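/- Let g_L be the left ESFR correction function with parameter η ≥ 0 and degree p ≥ 1, and let φ be a polynomial of degree at most p − 1. Then ∫_{−1}^{1} g_L(r) φ'(r) dr = (−1)^{p+1} η α_{p−1} / ((1+η)(2p−1)), where α_{p−1} is the coefficient of Ψ_{p−1} in the Legendre expansion of φ'. In particular this integral is zero for all such φ if and only if η = 0. -/

import Mathlib

/-- The degree-`p` Legendre polynomial via the Rodrigues formula. -/
noncomputable def legendre (p : ℕ) (r : ℝ) : ℝ :=
  (1 / ((2:ℝ)^p * (Nat.factorial p))) * iteratedDeriv p (fun x : ℝ => (x^2 - 1)^p) r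


/-- Left ESFR correction function with parameter `η`. -/
noncomputable def gL (p : ℕ) (η r : ℝ) : ℝ :=
  ((-1:ℝ)^p / 2) *
    (legendre p r - (η * legendre (p-1) r + legendre (p+1) r) / (1 + η))

/-- Right ESFR correction function with parameter `η`. -/
noncomputable def gR (p : ℕ) (η r : ℝ) : ℝ :=
  (1/2 : ℝ) *
    (legendre p r + (η * legendre (p-1) r + legendre (p+1) r) / (1 + η))

/-!
Expand `φ' = ∑ i < p, α i • Ψ i`; then only the Legendre moments `∫ Ψ k * Ψ i` with
`k ∈ {p - 1, p, p + 1}` and `i < p` enter. By Rodrigues' formula and `n`-fold integration by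
parts, whose boundary terms vanish because `(r ^ 2 - 1) ^ n` has zeros of order `n` at `±1`,
`∫ Ψ n * f = (2 ^ n * n!)⁻¹ * ∫ (1 - r ^ 2) ^ n * f⁽ⁿ⁾`. This gives orthogonality and,
with `∫ (1 - r ^ 2) ^ n = 2 ^ (2n+1) * (n!) ^ 2 / (2n+1)!`, the norm `2 / (2n + 1)`. Hence only
the `Ψ (p - 1)` term of `g_L` contributes, with weight `-(-1) ^ p / 2 * η / (1 + η)`.
-/

open Polynomial intervalIntegral

theorem Polynomial.iteratedDeriv_eval {𝕜 : Type*} [NontriviallyNormedField 𝕜] (k : ℕ)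
    (q : 𝕜[X]) : iteratedDeriv k (fun x => q.eval x) = fun x => (derivative^[k] q).eval x := by
  induction k generalizing q with
  | zero => simp
  | succ k ih =>
    have hderiv : _root_.deriv (fun x => q.eval x) = fun x => q.derivative.eval x := by
      ext x; exact q.deriv
    rw [iteratedDeriv_succ', hderiv, ih, Function.iterate_succ_apply]

theorem Polynomial.iterate_derivative_natDegree {R : Type*} [CommSemiring R] (q : R[X]) :
    derivative^[q.natDegree] q = C (q.natDegree.factorial * q.leadingCoeff) := by
  rw [eq_C_of_natDegree_le_zero (p := derivative^[q.natDegree] q)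
      ((natDegree_iterate_derivative _ _).trans_eq (Nat.sub_self _)),
    coeff_iterate_derivative, zero_add, Nat.descFactorial_self, nsmul_eq_mul, leadingCoeff]

theorem Polynomial.integral_derivative_mul_eq_sub (a b : ℝ) (u v : ℝ[X]) :
    ∫ r in a..b, u.derivative.eval r * v.eval r
      = u.eval b * v.eval b - u.eval a * v.eval a
        - ∫ r in a..b, u.eval r * v.derivative.eval r := by
  rw [eq_sub_iff_add_eq, ← integral_add ((by fun_prop : Continuous _).intervalIntegrable _ _)
    ((by fun_prop : Continuous _).intervalIntegrable _ _)]
  exact integral_deriv_mul_eq_sub (fun x _ => u.hasDerivAt x) (fun x _ => v.hasDerivAt x)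
    (u.derivative.continuous.intervalIntegrable _ _)
    (v.derivative.continuous.intervalIntegrable _ _)

theorem Polynomial.integral_iterate_derivative_mul_of_isRoot {a b : ℝ} {m : ℕ} {w : ℝ[X]}
    (hw : ∀ k < m, (derivative^[k] w).IsRoot a ∧ (derivative^[k] w).IsRoot b) (f : ℝ[X]) :
    ∫ r in a..b, (derivative^[m] w).eval r * f.eval r
      = (-1) ^ m * ∫ r in a..b, w.eval r * (derivative^[m] f).eval r := by
  induction m generalizing w with
  | zero => simp
  | succ m ih =>
    obtain ⟨hwa, hwb⟩ := hw 0 m.succ_pos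
    have hw' : ∀ k < m, (derivative^[k] w.derivative).IsRoot a
        ∧ (derivative^[k] w.derivative).IsRoot b := fun k hk => by
      simpa only [← Function.iterate_succ_apply] using hw (k + 1) (by omega)
    simp only [Function.iterate_zero_apply, IsRoot.def] at hwa hwb
    rw [Function.iterate_succ_apply, ih hw', integral_derivative_mul_eq_sub, hwa, hwb,
      ← Function.iterate_succ_apply' derivative]
    ring

noncomputable def legendrePoly (n : ℕ) : ℝ[X] :=
  C (1 / (2 ^ n * n.factorial : ℝ)) * derivative^[n] ((X ^ 2 - 1) ^ n)

theorem legendre_eq (n : ℕ) : legendre n = fun r => (legendrePoly n).eval r := by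
  have hpow : (fun x : ℝ => (x ^ 2 - 1) ^ n) = fun x => ((X ^ 2 - 1) ^ n : ℝ[X]).eval x := by
    ext x; simp
  ext r
  simp [legendre, legendrePoly, hpow, Polynomial.iteratedDeriv_eval]

theorem continuous_legendre (n : ℕ) : Continuous (legendre n) := by
  rw [legendre_eq]; exact (legendrePoly n).continuous

theorem monic_sq_sub_one_pow {R : Type*} [CommRing R] (n : ℕ) : ((X ^ 2 - 1 : R[X]) ^ n).Monic :=
  C_1 (R := R) ▸ (monic_X_pow_sub_C (1 : R) two_ne_zero).pow n

theorem natDegree_sq_sub_one_pow {R : Type*} [CommRing R] [Nontrivial R] (n : ℕ) :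
    ((X ^ 2 - 1 : R[X]) ^ n).natDegree = 2 * n := by
  rw [← C_1, (monic_X_pow_sub_C (1 : R) two_ne_zero).natDegree_pow, natDegree_X_pow_sub_C,
    mul_comm]

theorem natDegree_legendrePoly_le (n : ℕ) : (legendrePoly n).natDegree ≤ n := by
  refine (natDegree_C_mul_le _ _).trans ((natDegree_iterate_derivative _ _).trans ?_)
  rw [natDegree_sq_sub_one_pow]
  omega

theorem integral_legendrePoly_mul (n : ℕ) (f : ℝ[X]) :
    ∫ r in (-1 : ℝ)..1, (legendrePoly n).eval r * f.eval r
      = 1 / (2 ^ n * n.factorial : ℝ)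
        * ∫ r in (-1 : ℝ)..1, (1 - r ^ 2) ^ n * (derivative^[n] f).eval r := by
  have hroots : ∀ k < n, (derivative^[k] ((X ^ 2 - 1 : ℝ[X]) ^ n)).IsRoot (-1)
      ∧ (derivative^[k] ((X ^ 2 - 1 : ℝ[X]) ^ n)).IsRoot 1 := by
    intro k hk
    obtain ⟨q, hq⟩ := pow_sub_dvd_iterate_derivative_pow (X ^ 2 - 1 : ℝ[X]) n k
    simp [hq, IsRoot.def, zero_pow (Nat.sub_ne_zero_of_lt hk)]
  have hpoint : ∀ r : ℝ, (legendrePoly n).eval r * f.eval r = 1 / (2 ^ n * n.factorial : ℝ)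
      * ((derivative^[n] ((X ^ 2 - 1 : ℝ[X]) ^ n)).eval r * f.eval r) := fun r => by
    simp only [legendrePoly, eval_mul, eval_C, mul_assoc]
  rw [integral_congr fun r _ => hpoint r, integral_const_mul,
    integral_iterate_derivative_mul_of_isRoot hroots, ← integral_const_mul]
  congr 1
  refine integral_congr fun r _ => ?_
  simp only [eval_pow, eval_sub, eval_X, eval_one, ← mul_assoc, ← mul_pow]
  ring

theorem integral_legendrePoly_mul_eq_zero {n : ℕ} {f : ℝ[X]} (hf : f.natDegree < n) :
    ∫ r in (-1 : ℝ)..1, (legendrePoly n).eval r * f.eval r = 0 := by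
  simp [integral_legendrePoly_mul, iterate_derivative_eq_zero hf]

theorem integral_one_sub_sq_pow_succ (n : ℕ) :
    (2 * n + 3 : ℝ) * ∫ r in (-1 : ℝ)..1, (1 - r ^ 2) ^ (n + 1)
      = (2 * n + 2) * ∫ r in (-1 : ℝ)..1, (1 - r ^ 2) ^ n := by
  have hibp := integral_derivative_mul_eq_sub (-1) 1 ((1 - X ^ 2) ^ (n + 1)) X
  have hpoint : ∀ r : ℝ, ((1 - X ^ 2 : ℝ[X]) ^ (n + 1)).derivative.eval r * X.eval r
      = (2 * n + 2) * ((1 - r ^ 2) ^ (n + 1) - (1 - r ^ 2) ^ n) := fun r => by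
    simp only [derivative_pow, derivative_sub, derivative_one, derivative_X, eval_mul,
      eval_pow, eval_sub, eval_one, eval_X, eval_C, zero_sub, eval_neg, add_tsub_cancel_right,
      Nat.cast_add, Nat.cast_one, Nat.cast_ofNat]
    ring
  rw [integral_congr fun r _ => hpoint r, integral_const_mul,
    integral_sub ((by fun_prop : Continuous _).intervalIntegrable _ _)
      ((by fun_prop : Continuous _).intervalIntegrable _ _)] at hibp
  norm_num at hibp
  linarith

theorem integral_one_sub_sq_pow (n : ℕ) :
    ∫ r in (-1 : ℝ)..1, (1 - r ^ 2) ^ n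
      = (2 ^ (2 * n + 1) * n.factorial ^ 2 / (2 * n + 1).factorial : ℝ) := by
  induction n with
  | zero => norm_num
  | succ n ih =>
    have hrec := integral_one_sub_sq_pow_succ n
    rw [ih] at hrec
    rw [eq_div_iff (by positivity), ← mul_right_inj' (by positivity : (2 * n + 3 : ℝ) ≠ 0),
      ← mul_assoc, hrec, show 2 * (n + 1) + 1 = 2 * n + 1 + 1 + 1 by ring]
    simp only [Nat.factorial_succ, Nat.cast_mul, Nat.cast_add, Nat.cast_one, Nat.cast_ofNat]
    field_simp
    ring

theorem integral_legendrePoly_mul_self (n : ℕ) :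
    ∫ r in (-1 : ℝ)..1, (legendrePoly n).eval r * (legendrePoly n).eval r
      = 2 / (2 * n + 1) := by
  have htop : derivative^[n] (legendrePoly n)
      = C (1 / (2 ^ n * n.factorial : ℝ) * (2 * n).factorial) := by
    rw [legendrePoly, iterate_derivative_C_mul, ← Function.iterate_add_apply, ← two_mul,
      ← natDegree_sq_sub_one_pow (R := ℝ), iterate_derivative_natDegree,
      (monic_sq_sub_one_pow n).leadingCoeff, natDegree_sq_sub_one_pow, mul_one, ← C_mul]
  simp only [integral_legendrePoly_mul, htop, eval_C, integral_mul_const, integral_one_sub_sq_pow,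
    Nat.factorial_succ, Nat.cast_mul, Nat.cast_add, Nat.cast_one, Nat.cast_ofNat]
  field_simp
  ring

theorem integral_legendre_mul_legendre (k i : ℕ) :
    ∫ r in (-1 : ℝ)..1, legendre k r * legendre i r
      = if k = i then (2 / (2 * k + 1) : ℝ) else 0 := by
  simp only [legendre_eq]
  split_ifs with hki
  · subst hki
    exact integral_legendrePoly_mul_self k
  · rcases Nat.lt_or_gt_of_ne hki with hlt | hgt
    · simp_rw [mul_comm ((legendrePoly k).eval _)]
      exact integral_legendrePoly_mul_eq_zero ((natDegree_legendrePoly_le k).trans_lt hlt)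
    · exact integral_legendrePoly_mul_eq_zero ((natDegree_legendrePoly_le i).trans_lt hgt)

theorem integral_legendre_mul_sum (k n : ℕ) (α : ℕ → ℝ) :
    ∫ r in (-1 : ℝ)..1, legendre k r * ∑ i ∈ Finset.range n, α i * legendre i r
      = if k < n then α k * (2 / (2 * k + 1)) else 0 := by
  simp_rw [Finset.mul_sum, mul_left_comm (legendre k _)]
  rw [integral_finsetSum (f := fun i r => α i * (legendre k r * legendre i r)) fun i _ =>
    (continuous_const.mul ((continuous_legendre k).mul (continuous_legendre i))).intervalIntegrable
      _ _]
  simp_rw [integral_const_mul, integral_legendre_mul_legendre, mul_ite, mul_zero,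
    Finset.sum_ite_eq, Finset.mem_range]

theorem integral_gL_mul (p : ℕ) (η a b : ℝ) {F : ℝ → ℝ} (hF : Continuous F) :
    ∫ r in a..b, gL p η r * F r
      = (-1) ^ p / 2 * ((∫ r in a..b, legendre p r * F r)
        - (η * (∫ r in a..b, legendre (p - 1) r * F r)
          + ∫ r in a..b, legendre (p + 1) r * F r) / (1 + η)) := by
  have hint : ∀ k, IntervalIntegrable (fun r => legendre k r * F r) MeasureTheory.volume a b :=
    fun k => ((continuous_legendre k).mul hF).intervalIntegrable _ _
  have hpoint : ∀ r, gL p η r * F r = (-1) ^ p / 2 * (legendre p r * F r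
      - (η * (legendre (p - 1) r * F r) + legendre (p + 1) r * F r) / (1 + η)) := fun r => by
    rw [gL]; ring
  simp_rw [hpoint]
  rw [integral_const_mul,
    integral_sub (hint p) ((((hint _).const_mul η).add (hint _)).div_const _), integral_div,
    integral_add ((hint _).const_mul η) (hint _), integral_const_mul]

open Polynomial in
theorem gL_inner_product_deriv_general (p : ℕ) (hp : 1 ≤ p) (η : ℝ)
    (φ : Polynomial ℝ) (α : ℕ → ℝ)
    (hα : ∀ r : ℝ, φ.derivative.eval r = ∑ i ∈ Finset.range p, α i * legendre i r) :
    ∫ r in (-1:ℝ)..1, gL p η r * φ.derivative.eval r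
      = (-1:ℝ)^(p+1) * η * α (p-1) / ((1 + η) * (2*(p:ℝ) - 1)) := by
  rw [integral_gL_mul p η (-1) 1 φ.derivative.continuous]
  simp only [hα, integral_legendre_mul_sum]
  rw [if_neg (lt_irrefl p), if_pos (by omega), if_neg (by omega), Nat.cast_sub hp, ← div_div]
  ring

open Polynomial in
theorem gL_inner_product_deriv (p : ℕ) (hp : 1 ≤ p) (η : ℝ) (hη : 0 ≤ η)
    (φ : Polynomial ℝ) (hφ : φ.degree ≤ (p - 1 : ℕ)) (α : ℕ → ℝ)
    (hα : ∀ r : ℝ, φ.derivative.eval r = ∑ i ∈ Finset.range p, α i * legendre i r) :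
    ∫ r in (-1:ℝ)..1, gL p η r * φ.derivative.eval r
      = (-1:ℝ)^(p+1) * η * α (p-1) / ((1 + η) * (2*(p:ℝ) - 1)) :=
  gL_inner_product_deriv_general p hp η φ α hα
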